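/- There exists a function Ñ assigning to each finite sequence (N_1,…,N_{k−1}) of positive integers a positive integer, such that whenever the parameter sequence satisfies N_k ≥ Ñ(N_1,…,N_{k−1}) for every k ≥ 1, then for every k ≥ 1: if k is odd then f_0(a) > 100·f_0(b) for all a ∈ A_k and b ∈ B_k, and if k is even then f_0(b) > 100·f_0(a) for all a ∈ A_k and b ∈ B_k. -/

import Mathlib

open MeasureTheory Filter Topology
open scoped ENNReal Classical

noncomputable section

/-- The `m`-fold concatenation `u^m` of the word `u`. -/
def repW (u : List (Fin 3)) (m : ℕ) : List (Fin 3) := (List.replicate m u).flatten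

/-- The modified construction over the alphabet `{0,1,2}`:
`consAB3 N k = (ℓ_k, A_k, B_k)`, with `ℓ_0 = 2`, `A_0 = {00, 01}`, `B_0 = {00, 02}`;
for `k` odd, `A_k = {a^{1+2^{ℓ_{k-1}}+N_k} : a ∈ A_{k-1}}` and
`B_k = {b^{1+2^{ℓ_{k-1}}} 2^{N_k ℓ_{k-1}} : b ∈ B_{k-1}}`, and symmetrically
(with runs of `1`s) for `k` even; `ℓ_k = ℓ_{k-1}(1 + 2^{ℓ_{k-1}} + N_k)`. -/
def consAB3 (N : ℕ → ℕ) : ℕ → ℕ × Finset (List (Fin 3)) × Finset (List (Fin 3))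
  | 0 => (2, {[0, 0], [0, 1]}, {[0, 0], [0, 2]})
  | k + 1 =>
    let ℓ := (consAB3 N k).1
    let A := (consAB3 N k).2.1
    let B := (consAB3 N k).2.2
    let n := N (k + 1)
    if k % 2 = 0 then -- `k + 1` is odd
      (ℓ * (1 + 2 ^ ℓ + n),
        A.image fun a => repW a (1 + 2 ^ ℓ + n),
        B.image fun b => repW b (1 + 2 ^ ℓ) ++ List.replicate (n * ℓ) (2 : Fin 3))
    else -- `k + 1` is even
      (ℓ * (1 + 2 ^ ℓ + n),
        A.image fun a => repW a (1 + 2 ^ ℓ) ++ List.replicate (n * ℓ) (1 : Fin 3),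
        B.image fun b => repW b (1 + 2 ^ ℓ + n))

/-- The common length `ℓ_k` of the words of `A_k ∪ B_k`. -/
def ell3 (N : ℕ → ℕ) (k : ℕ) : ℕ := (consAB3 N k).1

/-- The set of words `A_k`. -/
def Ak3 (N : ℕ → ℕ) (k : ℕ) : Finset (List (Fin 3)) := (consAB3 N k).2.1

/-- The set of words `B_k`. -/
def Bk3 (N : ℕ → ℕ) (k : ℕ) : Finset (List (Fin 3)) := (consAB3 N k).2.2

/-- The frequency `f_0(u)` of the symbol `0` in the word `u`. -/
def freq03 (u : List (Fin 3)) : ℝ := (u.count 0 : ℝ) / u.length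

/-! Every word of `A_k ∪ B_k` has length `ℓ_k` and contains a `0`. At an odd step, with
`ℓ = ℓ_{k-1}`, a word of `B_k` takes all its zeros from `1 + 2^ℓ` copies of a word of
length `ℓ`, so it has at most `(1 + 2^ℓ) ℓ` of them, while a word of `A_k` consists of at
least `N_k` copies of a word containing a zero. Since `ℓ_{k-1}` is a function of `N_1, …, N_{k-1}`,
the threshold `Ñ = 100 (1 + 2^ℓ) ℓ + 1` works; even steps are symmetric. -/

def ellStep (ℓ n : ℕ) : ℕ := ℓ * (1 + 2 ^ ℓ + n)

lemma length_repW (u : List (Fin 3)) (m : ℕ) : (repW u m).length = m * u.length := by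
  simp [repW]

lemma count_repW (x : Fin 3) (u : List (Fin 3)) (m : ℕ) :
    (repW u m).count x = m * u.count x := by
  simp [repW, List.count_flatten]

lemma length_repW_ellStep {u : List (Fin 3)} {ℓ : ℕ} (hu : u.length = ℓ) (n : ℕ) :
    (repW u (1 + 2 ^ ℓ + n)).length = ellStep ℓ n := by
  rw [length_repW, hu, ellStep, mul_comm]

lemma length_repW_append_replicate_ellStep {u : List (Fin 3)} {ℓ : ℕ} (hu : u.length = ℓ)
    (n : ℕ) (s : Fin 3) :
    (repW u (1 + 2 ^ ℓ) ++ List.replicate (n * ℓ) s).length = ellStep ℓ n := by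
  simp only [List.length_append, length_repW, List.length_replicate, hu, ellStep]
  ring

lemma count_repW_pos {x : Fin 3} {u : List (Fin 3)} {m : ℕ} (hu : 0 < u.count x)
    (hm : 0 < m) : 0 < (repW u m).count x := by
  rw [count_repW]
  positivity

lemma count_repW_append_pos {x : Fin 3} {u : List (Fin 3)} {m : ℕ} (hu : 0 < u.count x)
    (hm : 0 < m) (w : List (Fin 3)) : 0 < (repW u m ++ w).count x := by
  rw [List.count_append]
  exact Nat.add_pos_left (count_repW_pos hu hm) _

lemma le_count_repW_ellStep {x : Fin 3} {u : List (Fin 3)} (hu : 0 < u.count x) (ℓ n : ℕ) :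
    n ≤ (repW u (1 + 2 ^ ℓ + n)).count x := by
  rw [count_repW]
  exact le_mul_of_le_of_one_le (Nat.le_add_left _ _) hu

lemma count_zero_repW_append_replicate_le {u : List (Fin 3)} {ℓ : ℕ} (hu : u.length = ℓ)
    (n : ℕ) {s : Fin 3} (hs : s ≠ 0) :
    (repW u (1 + 2 ^ ℓ) ++ List.replicate (n * ℓ) s).count 0 ≤ (1 + 2 ^ ℓ) * ℓ := by
  simp only [List.count_append, count_repW, List.count_replicate, beq_iff_eq, hs, if_false,
    add_zero, ← hu]
  exact Nat.mul_le_mul_left _ List.count_le_length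

lemma mul_freq03_lt_freq03 {u v : List (Fin 3)} (hl : u.length = v.length) {c : ℕ}
    (h : c * u.count 0 < v.count 0) : c * freq03 u < freq03 v := by
  have hv : (0 : ℝ) < v.length := by
    exact_mod_cast (Nat.zero_lt_of_lt h).trans_le List.count_le_length
  rw [freq03, freq03, hl, mul_div_assoc', div_lt_div_iff_of_pos_right hv]
  exact_mod_cast h

lemma mul_freq03_repW_append_replicate_lt {u v : List (Fin 3)} {ℓ n : ℕ} (hu : u.length = ℓ)
    (hv : v.length = ℓ) (hv0 : 0 < v.count 0) {s : Fin 3} (hs : s ≠ 0)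
    (hn : 100 * ((1 + 2 ^ ℓ) * ℓ) < n) :
    100 * freq03 (repW u (1 + 2 ^ ℓ) ++ List.replicate (n * ℓ) s) <
      freq03 (repW v (1 + 2 ^ ℓ + n)) := by
  refine mul_freq03_lt_freq03
    ((length_repW_append_replicate_ellStep hu n s).trans (length_repW_ellStep hv n).symm) ?_
  calc 100 * _ ≤ 100 * ((1 + 2 ^ ℓ) * ℓ) :=
        Nat.mul_le_mul_left _ (count_zero_repW_append_replicate_le hu n hs)
    _ < n := hn
    _ ≤ _ := le_count_repW_ellStep hv0 ℓ n

section Construction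

variable (N : ℕ → ℕ) {k : ℕ}

lemma ell3_succ (k : ℕ) : ell3 N (k + 1) = ellStep (ell3 N k) (N (k + 1)) := by
  by_cases hk : k % 2 = 0 <;> simp [ell3, consAB3, ellStep, hk]

lemma ell3_eq_foldl (k : ℕ) :
    ell3 N k = ((List.range k).map fun i => N (i + 1)).foldl ellStep 2 := by
  induction k with
  | zero => rfl
  | succ k ih => simp [List.range_succ, List.foldl_append, ← ih, ell3_succ]

lemma Ak3_succ_of_even (hk : Even k) :
    Ak3 N (k + 1) = (Ak3 N k).image fun a => repW a (1 + 2 ^ ell3 N k + N (k + 1)) := by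
  simp [Ak3, consAB3, Nat.even_iff.mp hk, ell3]

lemma Bk3_succ_of_even (hk : Even k) :
    Bk3 N (k + 1) = (Bk3 N k).image fun b =>
      repW b (1 + 2 ^ ell3 N k) ++ List.replicate (N (k + 1) * ell3 N k) 2 := by
  simp [Bk3, consAB3, Nat.even_iff.mp hk, ell3]

lemma Ak3_succ_of_odd (hk : Odd k) :
    Ak3 N (k + 1) = (Ak3 N k).image fun a =>
      repW a (1 + 2 ^ ell3 N k) ++ List.replicate (N (k + 1) * ell3 N k) 1 := by
  simp [Ak3, consAB3, Nat.odd_iff.mp hk, ell3]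

lemma Bk3_succ_of_odd (hk : Odd k) :
    Bk3 N (k + 1) = (Bk3 N k).image fun b => repW b (1 + 2 ^ ell3 N k + N (k + 1)) := by
  simp [Bk3, consAB3, Nat.odd_iff.mp hk, ell3]

lemma length_eq_ell3_and_count_zero_pos (k : ℕ) :
    ∀ w ∈ Ak3 N k ∪ Bk3 N k, w.length = ell3 N k ∧ 0 < w.count 0 := by
  induction k with
  | zero => simp [Ak3, Bk3, ell3, consAB3]
  | succ k ih =>
    simp only [Finset.mem_union] at ih
    rw [ell3_succ]
    rcases Nat.even_or_odd k with hk | hk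
    · simp only [Ak3_succ_of_even N hk, Bk3_succ_of_even N hk, Finset.mem_union,
        Finset.mem_image]
      rintro w (⟨a, ha, rfl⟩ | ⟨b, hb, rfl⟩)
      · obtain ⟨hl, hc⟩ := ih a (Or.inl ha)
        exact ⟨length_repW_ellStep hl _, count_repW_pos hc (by positivity)⟩
      · obtain ⟨hl, hc⟩ := ih b (Or.inr hb)
        exact ⟨length_repW_append_replicate_ellStep hl _ _,
          count_repW_append_pos hc (by positivity) _⟩
    · simp only [Ak3_succ_of_odd N hk, Bk3_succ_of_odd N hk, Finset.mem_union,
        Finset.mem_image]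
      rintro w (⟨a, ha, rfl⟩ | ⟨b, hb, rfl⟩)
      · obtain ⟨hl, hc⟩ := ih a (Or.inl ha)
        exact ⟨length_repW_append_replicate_ellStep hl _ _,
          count_repW_append_pos hc (by positivity) _⟩
      · obtain ⟨hl, hc⟩ := ih b (Or.inr hb)
        exact ⟨length_repW_ellStep hl _, count_repW_pos hc (by positivity)⟩

lemma mul_freq03_Bk3_lt_Ak3_succ_of_even (hk : Even k)
    (hN : 100 * ((1 + 2 ^ ell3 N k) * ell3 N k) < N (k + 1)) :
    ∀ a ∈ Ak3 N (k + 1), ∀ b ∈ Bk3 N (k + 1), 100 * freq03 b < freq03 a := by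
  intro a ha b hb
  simp only [Ak3_succ_of_even N hk, Bk3_succ_of_even N hk, Finset.mem_image] at ha hb
  obtain ⟨a, ha, rfl⟩ := ha
  obtain ⟨b, hb, rfl⟩ := hb
  obtain ⟨hla, ha0⟩ := length_eq_ell3_and_count_zero_pos N k a (Finset.mem_union_left _ ha)
  obtain ⟨hlb, -⟩ := length_eq_ell3_and_count_zero_pos N k b (Finset.mem_union_right _ hb)
  exact mul_freq03_repW_append_replicate_lt hlb hla ha0 (by decide) hN

lemma mul_freq03_Ak3_lt_Bk3_succ_of_odd (hk : Odd k)
    (hN : 100 * ((1 + 2 ^ ell3 N k) * ell3 N k) < N (k + 1)) :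
    ∀ a ∈ Ak3 N (k + 1), ∀ b ∈ Bk3 N (k + 1), 100 * freq03 a < freq03 b := by
  intro a ha b hb
  simp only [Ak3_succ_of_odd N hk, Bk3_succ_of_odd N hk, Finset.mem_image] at ha hb
  obtain ⟨a, ha, rfl⟩ := ha
  obtain ⟨b, hb, rfl⟩ := hb
  obtain ⟨hla, -⟩ := length_eq_ell3_and_count_zero_pos N k a (Finset.mem_union_left _ ha)
  obtain ⟨hlb, hb0⟩ := length_eq_ell3_and_count_zero_pos N k b (Finset.mem_union_right _ hb)
  exact mul_freq03_repW_append_replicate_lt hla hlb hb0 (by decide) hN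

end Construction

/-- There is a function `Ñ` of finite sequences `(N_1, …, N_{k-1})` such
that whenever `N_k ≥ Ñ(N_1, …, N_{k-1})` for all `k ≥ 1`, then for all `k ≥ 1`: if `k` is
odd then `f_0(a) > 100 f_0(b)` for all `a ∈ A_k`, `b ∈ B_k`, and if `k` is even then
`f_0(b) > 100 f_0(a)` for all `a ∈ A_k`, `b ∈ B_k`. -/
theorem stmt16 :
    ∃ NT : List ℕ → ℕ, ∀ N : ℕ → ℕ, (∀ k, 0 < N k) →
      (∀ k : ℕ, NT ((List.range k).map fun i => N (i + 1)) ≤ N (k + 1)) →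
      ∀ k : ℕ, 1 ≤ k →
        (Odd k → ∀ a ∈ Ak3 N k, ∀ b ∈ Bk3 N k, 100 * freq03 b < freq03 a) ∧
        (Even k → ∀ a ∈ Ak3 N k, ∀ b ∈ Bk3 N k, 100 * freq03 a < freq03 b) := by
  refine ⟨fun L => 100 * ((1 + 2 ^ L.foldl ellStep 2) * L.foldl ellStep 2) + 1, ?_⟩
  intro N _ hN k hk
  obtain ⟨j, rfl⟩ : ∃ j, k = j + 1 := ⟨k - 1, by omega⟩
  have hNj : 100 * ((1 + 2 ^ ell3 N j) * ell3 N j) < N (j + 1) := by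
    rw [ell3_eq_foldl]
    exact hN j
  rcases Nat.even_or_odd j with hj | hj
  · exact ⟨fun _ => mul_freq03_Bk3_lt_Ak3_succ_of_even N hj hNj,
      fun h => (Nat.not_even_iff_odd.mpr hj.add_one h).elim⟩
  · exact ⟨fun h => (Nat.not_odd_iff_even.mpr hj.add_one h).elim,
      fun _ => mul_freq03_Ak3_lt_Bk3_succ_of_odd N hj hNj⟩

end
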